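/- Let p₁, p₂ ∈ [0,1] with p₁ > 0, and let N ≥ 1 be an integer. Then the expected number of successes in N steps starting from the failure state satisfies the exact identity ∑_{k=1}^{N} (P_BKP^k)₀₂ = N·p₁p₂/(1+p₁) − p₁p₂·(1−(−p₁)^N)/(1+p₁)². In particular, the exact mean throughput per step over a horizon of N steps is p₁p₂/(1+p₁) − p₁p₂(1−(−p₁)^N)/((1+p₁)²·N). -/

import Mathlib

/-!
The entries `a k = (P ^ k) 0 1` satisfy `a (k + 1) = p₁ (1 - a k)`, because column 1 of `P` is
`(p₁, 0, p₁)` and every row of `P ^ k` sums to one; hence `a k = p₁ (1 - (-p₁) ^ k) / (1 + p₁)`.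
Column 2 of `P` is `(0, p₂, 0)`, so `(P ^ (k + 1)) 0 2 = p₂ a k`, and the sum over the horizon is
a geometric sum, evaluated by induction on `N`.
-/

namespace Matrix

variable {n R : Type*} [Fintype n] [DecidableEq n] [Semiring R]

theorem pow_mulVec_one_of_mulVec_one {M : Matrix n n R} (hM : M *ᵥ 1 = 1) (k : ℕ) :
    M ^ k *ᵥ 1 = 1 := by
  induction k with
  | zero => simp
  | succ k ih => rw [pow_succ, ← mulVec_mulVec, hM, ih]

theorem sum_pow_apply_of_mulVec_one {M : Matrix n n R} (hM : M *ᵥ 1 = 1) (k : ℕ) (i : n) :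
    ∑ j, (M ^ k) i j = 1 := by
  simpa [mulVec, dotProduct] using congrFun (pow_mulVec_one_of_mulVec_one hM k) i

end Matrix

open Matrix Finset

def bkpMatrix (p₁ p₂ : ℝ) : Matrix (Fin 3) (Fin 3) ℝ :=
  !![1 - p₁, p₁, 0; 1 - p₂, 0, p₂; 1 - p₁, p₁, 0]

section bkpMatrix

variable (p₁ p₂ : ℝ)

theorem bkpMatrix_mulVec_one : bkpMatrix p₁ p₂ *ᵥ 1 = 1 := by
  ext i
  fin_cases i <;> simp [bkpMatrix, mulVec, dotProduct, Fin.sum_univ_three]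

theorem bkpMatrix_pow_succ_apply_zero_one (k : ℕ) :
    (bkpMatrix p₁ p₂ ^ (k + 1)) 0 1 = p₁ * (1 - (bkpMatrix p₁ p₂ ^ k) 0 1) := by
  have hrow := sum_pow_apply_of_mulVec_one (bkpMatrix_mulVec_one p₁ p₂) k 0
  rw [Fin.sum_univ_three] at hrow
  rw [pow_succ, mul_apply, Fin.sum_univ_three]
  change _ * p₁ + _ * 0 + _ * p₁ = _
  linear_combination p₁ * hrow

theorem bkpMatrix_pow_succ_apply_zero_two (k : ℕ) :
    (bkpMatrix p₁ p₂ ^ (k + 1)) 0 2 = p₂ * (bkpMatrix p₁ p₂ ^ k) 0 1 := by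
  rw [pow_succ, mul_apply, Fin.sum_univ_three]
  change _ * 0 + _ * p₂ + _ * 0 = _
  ring

variable {p₁}

theorem bkpMatrix_pow_apply_zero_one (hp : 1 + p₁ ≠ 0) (k : ℕ) :
    (bkpMatrix p₁ p₂ ^ k) 0 1 = p₁ * (1 - (-p₁) ^ k) / (1 + p₁) := by
  induction k with
  | zero => simp
  | succ k ih =>
    rw [bkpMatrix_pow_succ_apply_zero_one, ih]
    field_simp
    ring

theorem sum_Icc_bkpMatrix_pow_apply_zero_two (hp : 1 + p₁ ≠ 0) (N : ℕ) :
    ∑ k ∈ Icc 1 N, (bkpMatrix p₁ p₂ ^ k) 0 2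
      = N * (p₁ * p₂ / (1 + p₁)) - p₁ * p₂ * (1 - (-p₁) ^ N) / (1 + p₁) ^ 2 := by
  induction N with
  | zero => simp
  | succ N ih =>
    rw [sum_Icc_succ_top (by omega), ih, bkpMatrix_pow_succ_apply_zero_two,
      bkpMatrix_pow_apply_zero_one p₂ hp]
    field_simp
    push_cast
    ring

end bkpMatrix

theorem bkp_exact_mean_throughput_general (p₁ p₂ : ℝ)
    (h₁ : 0 < p₁)
    (N : ℕ) (hN : 1 ≤ N) :
    let P : Matrix (Fin 3) (Fin 3) ℝ :=
      !![1 - p₁, p₁, 0; 1 - p₂, 0, p₂; 1 - p₁, p₁, 0]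
    (∑ k ∈ Finset.Icc 1 N, (P ^ k) 0 2)
      = N * (p₁ * p₂ / (1 + p₁)) - p₁ * p₂ * (1 - (-p₁) ^ N) / (1 + p₁) ^ 2 ∧
    (∑ k ∈ Finset.Icc 1 N, (P ^ k) 0 2) / N
      = p₁ * p₂ / (1 + p₁) - p₁ * p₂ * (1 - (-p₁) ^ N) / ((1 + p₁) ^ 2 * N) := by
  intro P
  have hsum : ∑ k ∈ Finset.Icc 1 N, (P ^ k) 0 2
      = N * (p₁ * p₂ / (1 + p₁)) - p₁ * p₂ * (1 - (-p₁) ^ N) / (1 + p₁) ^ 2 :=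
    sum_Icc_bkpMatrix_pow_apply_zero_two p₂ (by positivity) N
  have hN₀ : (N : ℝ) ≠ 0 := by positivity
  refine ⟨hsum, ?_⟩
  rw [hsum]
  field_simp

/-- Exact finite-horizon mean throughput of double-heralded entanglement generation:
for `p₁ ∈ (0,1]`, `p₂ ∈ [0,1]`, and a horizon of `N ≥ 1` steps started from the
failure state, the expected number of successes satisfies
`∑_{k=1}^{N} (P_BKP^k)₀₂ = N·p₁p₂/(1+p₁) − p₁p₂(1−(−p₁)^N)/(1+p₁)²`,
so the mean throughput per step is
`p₁p₂/(1+p₁) − p₁p₂(1−(−p₁)^N)/((1+p₁)²·N)`. -/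
theorem bkp_exact_mean_throughput (p₁ p₂ : ℝ)
    (h₁ : 0 < p₁) (h₁' : p₁ ≤ 1) (h₂ : 0 ≤ p₂) (h₂' : p₂ ≤ 1)
    (N : ℕ) (hN : 1 ≤ N) :
    let P : Matrix (Fin 3) (Fin 3) ℝ :=
      !![1 - p₁, p₁, 0; 1 - p₂, 0, p₂; 1 - p₁, p₁, 0]
    (∑ k ∈ Finset.Icc 1 N, (P ^ k) 0 2)
      = N * (p₁ * p₂ / (1 + p₁)) - p₁ * p₂ * (1 - (-p₁) ^ N) / (1 + p₁) ^ 2 ∧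
    (∑ k ∈ Finset.Icc 1 N, (P ^ k) 0 2) / N
      = p₁ * p₂ / (1 + p₁) - p₁ * p₂ * (1 - (-p₁) ^ N) / ((1 + p₁) ^ 2 * N) :=
  bkp_exact_mean_throughput_general p₁ p₂ h₁ N hN
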